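/- Let H be a real Hilbert space, V a closed subspace of H, η ∈ (0,1] and γ > 0. Suppose (λ_k)_{k≥0} is a sequence with λ_k ∈ [η, 2−η] for all k, and define a trajectory by x_{k+1} := P_{V,λ_k}(x_k) for k ≥ 0 starting from any x_0 ∈ H. Then ∑_{k=0}^∞ ‖x_{k+1} − x_k‖^γ ≤ ((2−η)^γ/(1−(1−η)^γ))·‖x_0‖^γ. -/

import Mathlib

/-!
The relaxed projection fixes `P_V x` and multiplies the residual `x - P_V x = P_{Vᗮ} x` by
`1 - λ`, and it moves `x` by `λ (P_V x - x)`. Since `|1 - λ_k| ≤ 1 - η`, the residuals decay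
geometrically from `‖P_{Vᗮ} x₀‖ ≤ ‖x₀‖`, so `‖x_{k+1} - x_k‖ ≤ (2 - η) (1 - η)^k ‖x₀‖`; raising
to the power `γ` gives a geometric series of ratio `(1 - η)^γ < 1`.
-/

noncomputable def relaxProj {H : Type*} [NormedAddCommGroup H] [InnerProductSpace ℝ H]
    (V : Submodule ℝ H) [Submodule.HasOrthogonalProjection V] (l : ℝ) (x : H) : H :=
  (1 - l) • x + l • (Submodule.orthogonalProjectionOnto V x : H)

section RelaxedProjection

variable {H : Type*} [NormedAddCommGroup H] [InnerProductSpace ℝ H]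
  (V : Submodule ℝ H) [V.HasOrthogonalProjection]

theorem relaxProj_eq_sub_smul_starProjection_orthogonal (l : ℝ) (x : H) :
    relaxProj V l x = x - l • Vᗮ.starProjection x := by
  rw [relaxProj, Submodule.starProjection_orthogonal_val, ← Submodule.starProjection_apply]
  module

theorem starProjection_orthogonal_relaxProj (l : ℝ) (x : H) :
    Vᗮ.starProjection (relaxProj V l x) = (1 - l) • Vᗮ.starProjection x := by
  rw [relaxProj_eq_sub_smul_starProjection_orthogonal, map_sub, map_smul,
    Submodule.starProjection_mem_subspace_eq_self (⟨_, Vᗮ.starProjection_apply_mem x⟩ : Vᗮ)]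
  module

theorem norm_relaxProj_sub_self (l : ℝ) (x : H) :
    ‖relaxProj V l x - x‖ = |l| * ‖Vᗮ.starProjection x‖ := by
  rw [relaxProj_eq_sub_smul_starProjection_orthogonal, sub_sub_cancel_left, norm_neg, norm_smul,
    Real.norm_eq_abs]

theorem norm_starProjection_orthogonal_iterate_le {lam : ℕ → ℝ} {x : ℕ → H}
    (hx : ∀ k, x (k + 1) = relaxProj V (lam k) (x k)) {ρ : ℝ} (hρ : ∀ k, |1 - lam k| ≤ ρ)
    (k : ℕ) : ‖Vᗮ.starProjection (x k)‖ ≤ ρ ^ k * ‖x 0‖ := by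
  induction k with
  | zero => simpa using Vᗮ.norm_starProjection_apply_le (x 0)
  | succ k ih =>
    rw [hx, starProjection_orthogonal_relaxProj, norm_smul, Real.norm_eq_abs, pow_succ',
      mul_assoc]
    exact mul_le_mul (hρ k) ih (norm_nonneg _) ((abs_nonneg _).trans (hρ k))

end RelaxedProjection

theorem summable_and_tsum_le_of_le_geometric {b : ℕ → ℝ} {D r : ℝ} (hb0 : ∀ k, 0 ≤ b k)
    (hb : ∀ k, b k ≤ D * r ^ k) (hr0 : 0 ≤ r) (hr1 : r < 1) :
    Summable b ∧ ∑' k, b k ≤ D / (1 - r) := by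
  have hgeom : Summable (fun k => D * r ^ k) := (summable_geometric_of_lt_one hr0 hr1).mul_left D
  have hsum : Summable b := hgeom.of_nonneg_of_le hb0 hb
  refine ⟨hsum, ?_⟩
  calc ∑' k, b k ≤ ∑' k, D * r ^ k := hsum.tsum_le_tsum hb hgeom
    _ = D / (1 - r) := by rw [tsum_mul_left, tsum_geometric_of_lt_one hr0 hr1, div_eq_mul_inv]

theorem rpow_le_rpow_mul_pow_of_le_mul_pow {a C ρ γ : ℝ} {k : ℕ} (ha0 : 0 ≤ a)
    (ha : a ≤ C * ρ ^ k) (hC : 0 ≤ C) (hρ : 0 ≤ ρ) (hγ : 0 ≤ γ) :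
    a ^ γ ≤ C ^ γ * (ρ ^ γ) ^ k := by
  calc a ^ γ ≤ (C * ρ ^ k) ^ γ := Real.rpow_le_rpow ha0 ha hγ
    _ = C ^ γ * (ρ ^ γ) ^ k := by
      rw [Real.mul_rpow hC (by positivity), ← Real.rpow_natCast, ← Real.rpow_natCast,
        ← Real.rpow_mul hρ, ← Real.rpow_mul hρ, mul_comm (k : ℝ)]

theorem stmt_4_general {H : Type*} [NormedAddCommGroup H] [InnerProductSpace ℝ H]
    (V : Submodule ℝ H) [CompleteSpace V]
    (η γ : ℝ) (hη : η ∈ Set.Ioc (0 : ℝ) 1) (hγ : 0 < γ)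
    (lam : ℕ → ℝ) (hlam : ∀ k, lam k ∈ Set.Icc η (2 - η))
    (x : ℕ → H) (hx : ∀ k, x (k + 1) = relaxProj V (lam k) (x k)) :
    Summable (fun k => ‖x (k + 1) - x k‖ ^ γ) ∧
    ∑' k, ‖x (k + 1) - x k‖ ^ γ ≤ ((2 - η) ^ γ / (1 - (1 - η) ^ γ)) * ‖x 0‖ ^ γ := by
  obtain ⟨hη0, hη1⟩ := hη
  have hρ : ∀ k, |1 - lam k| ≤ 1 - η := fun k =>
    abs_le.2 ⟨by linarith [(hlam k).2], by linarith [(hlam k).1]⟩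
  have hstep (k : ℕ) : ‖x (k + 1) - x k‖ ≤ ((2 - η) * ‖x 0‖) * (1 - η) ^ k := by
    rw [hx, norm_relaxProj_sub_self, abs_of_nonneg (hη0.le.trans (hlam k).1), mul_assoc,
      mul_comm ‖x 0‖]
    exact mul_le_mul (hlam k).2 (norm_starProjection_orthogonal_iterate_le V hx hρ k)
      (norm_nonneg _) (by linarith)
  obtain ⟨hsum, hle⟩ := summable_and_tsum_le_of_le_geometric
    (fun k => Real.rpow_nonneg (norm_nonneg _) γ)
    (fun k => rpow_le_rpow_mul_pow_of_le_mul_pow (norm_nonneg _) (hstep k)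
      (mul_nonneg (by linarith) (norm_nonneg _)) (by linarith) hγ.le)
    (Real.rpow_nonneg (by linarith) γ) (Real.rpow_lt_one (by linarith) (by linarith) hγ)
  refine ⟨hsum, hle.trans_eq ?_⟩
  rw [Real.mul_rpow (by linarith) (norm_nonneg _)]
  ring

/-- moment bound for repeated relaxed projections onto a single subspace. -/
theorem stmt_4 {H : Type*} [NormedAddCommGroup H] [InnerProductSpace ℝ H] [CompleteSpace H]
    (V : Submodule ℝ H) [CompleteSpace V]
    (η γ : ℝ) (hη : η ∈ Set.Ioc (0 : ℝ) 1) (hγ : 0 < γ)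
    (lam : ℕ → ℝ) (hlam : ∀ k, lam k ∈ Set.Icc η (2 - η))
    (x : ℕ → H) (hx : ∀ k, x (k + 1) = relaxProj V (lam k) (x k)) :
    Summable (fun k => ‖x (k + 1) - x k‖ ^ γ) ∧
    ∑' k, ‖x (k + 1) - x k‖ ^ γ ≤ ((2 - η) ^ γ / (1 - (1 - η) ^ γ)) * ‖x 0‖ ^ γ :=
  stmt_4_general V η γ hη hγ lam hlam x hx
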